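/- Let G be a group of orientation-preserving homeomorphisms of ℝ (under composition) acting without fixed points, i.e., no element of G other than the identity fixes any point of ℝ. Then there exists an injective group homomorphism from G into the additive group (ℝ, +); in particular G is isomorphic to a subgroup of the additive group of ℝ. -/

import Mathlib

/-! Order `G` by `g ↦ g 0`; freeness makes this a linear order. It is invariant under left
multiplication because the elements are increasing, and under right multiplication because, by the
intermediate value theorem, two elements of `G` compare the same way at every point. It is
Archimedean: an element moving every point to the right has unbounded orbits, since a bounded
orbit would converge to a fixed point. Hölder's theorem finishes the proof: a bi-invariantly
ordered Archimedean group is commutative (it is cyclic if there is a least element above `1`;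
otherwise every commutator lies below every element above `1`), and an Archimedean ordered
abelian group embeds in `ℝ`. -/

open Function Set

theorem zpow_strictMono_of_one_lt {α : Type*} [Group α] [Preorder α] [MulLeftStrictMono α]
    {a : α} (ha : 1 < a) : StrictMono fun k : ℤ => a ^ k :=
  strictMono_int_of_lt_succ fun k => by
    simpa only [zpow_add_one] using lt_mul_of_one_lt_right' (a ^ k) ha

section ArchimedeanGroup

variable {α : Type*} [Group α] [LinearOrder α] [MulLeftMono α] [MulRightMono α]

theorem exists_zpow_le_lt_zpow_succ (arch : ∀ g h : α, 1 < h → ∃ n : ℕ, g ≤ h ^ n)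
    {a : α} (ha : 1 < a) (x : α) : ∃ m : ℤ, a ^ m ≤ x ∧ x < a ^ (m + 1) := by
  have hstrict := zpow_strictMono_of_one_lt ha
  obtain ⟨n, hn⟩ := arch x a ha
  obtain ⟨n', hn'⟩ := arch x⁻¹ a ha
  have hbdd : ∃ b : ℤ, ∀ k : ℤ, a ^ k ≤ x → k ≤ b :=
    ⟨n, fun k hk => hstrict.le_iff_le.1 (by simpa only [zpow_natCast] using hk.trans hn)⟩
  have hne : ∃ k : ℤ, a ^ k ≤ x :=
    ⟨-n', by rw [zpow_neg, zpow_natCast]; exact inv_le_of_inv_le' hn'⟩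
  obtain ⟨m, hm, hmax⟩ := Int.exists_greatest_of_bdd hbdd hne
  exact ⟨m, hm, lt_of_not_ge fun h => by have := hmax _ h; omega⟩

theorem eq_zpow_of_isLeast (arch : ∀ g h : α, 1 < h → ∃ n : ℕ, g ≤ h ^ n)
    {a : α} (ha : IsLeast {b | 1 < b} a) (x : α) : ∃ k : ℤ, x = a ^ k := by
  obtain ⟨m, hm, hm'⟩ := exists_zpow_le_lt_zpow_succ arch ha.1 x
  have hlow : 1 ≤ (a ^ m)⁻¹ * x := le_inv_mul_iff_mul_le.2 (by simpa using hm)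
  have hupp : (a ^ m)⁻¹ * x < a := inv_mul_lt_iff_lt_mul.2 (by rwa [← zpow_add_one])
  refine ⟨m, ?_⟩
  obtain h | h := hlow.eq_or_lt
  · exact (inv_mul_eq_one.1 h.symm).symm
  · exact absurd (ha.2 h) hupp.not_ge

theorem exists_mul_self_le_of_forall_exists_between (h : ∀ a : α, 1 < a → ∃ b, 1 < b ∧ b < a)
    {c : α} (hc : 1 < c) : ∃ ε, 1 < ε ∧ ε * ε ≤ c := by
  obtain ⟨d, hd, hdc⟩ := h c hc
  rcases le_total (d * d) c with hle | hle
  · exact ⟨d, hd, hle⟩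
  · refine ⟨d⁻¹ * c, lt_inv_mul_iff_mul_lt.2 (by simpa using hdc), ?_⟩
    have h1 : d⁻¹ * c * d⁻¹ ≤ 1 := by
      rw [mul_inv_le_one_iff_le, inv_mul_le_iff_le_mul]; exact hle
    calc d⁻¹ * c * (d⁻¹ * c) = d⁻¹ * c * d⁻¹ * c := by group
      _ ≤ 1 * c := mul_le_mul_left h1 c
      _ = c := one_mul c

theorem mul_le_mul_swap_of_forall_exists_mul_self_le
    (arch : ∀ g h : α, 1 < h → ∃ n : ℕ, g ≤ h ^ n)
    (hsq : ∀ c : α, 1 < c → ∃ ε, 1 < ε ∧ ε * ε ≤ c) (p q : α) : p * q ≤ q * p := by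
  by_contra! hlt
  obtain ⟨ε, hε, hεc⟩ := hsq (p * q / (q * p)) (one_lt_div'.2 hlt)
  obtain ⟨m, hpm, hpm'⟩ := exists_zpow_le_lt_zpow_succ arch hε p
  obtain ⟨n, hqn, hqn'⟩ := exists_zpow_le_lt_zpow_succ arch hε q
  -- `p * q` and `q * p` both lie in `[ε ^ (m + n), ε ^ (m + n + 2))`, so they differ by less
  -- than `ε * ε`.
  have : p * q < p * q / (q * p) * (q * p) := calc
    p * q < ε ^ (m + 1) * ε ^ (n + 1) := mul_lt_mul_of_lt_of_le hpm' hqn'.le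
    _ = ε * ε * (ε ^ n * ε ^ m) := by group
    _ ≤ p * q / (q * p) * (q * p) := mul_le_mul' hεc (mul_le_mul' hqn hpm)
  exact (div_mul_cancel (p * q) (q * p) ▸ this).false

theorem mul_comm_of_archimedean (arch : ∀ g h : α, 1 < h → ∃ n : ℕ, g ≤ h ^ n) (p q : α) :
    p * q = q * p := by
  by_cases hleast : ∃ a, IsLeast {b : α | 1 < b} a
  · obtain ⟨a, ha⟩ := hleast
    obtain ⟨j, rfl⟩ := eq_zpow_of_isLeast arch ha p
    obtain ⟨k, rfl⟩ := eq_zpow_of_isLeast arch ha q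
    exact Commute.zpow_zpow_self a j k
  · have hbetween : ∀ a : α, 1 < a → ∃ b, 1 < b ∧ b < a := by
      intro a ha
      by_contra! h
      exact hleast ⟨a, ha, h⟩
    have hsq c hc := exists_mul_self_le_of_forall_exists_between hbetween (c := c) hc
    exact le_antisymm (mul_le_mul_swap_of_forall_exists_mul_self_le arch hsq p q)
      (mul_le_mul_swap_of_forall_exists_mul_self_le arch hsq q p)

theorem exists_injective_monoidHom_real_of_archimedean
    (arch : ∀ g h : α, 1 < h → ∃ n : ℕ, g ≤ h ^ n) :
    ∃ φ : α →* Multiplicative ℝ, Injective φ := by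
  let : CommGroup α := { ‹Group α› with mul_comm := mul_comm_of_archimedean arch }
  have : IsOrderedMonoid α :=
    ⟨fun _ _ h c => mul_le_mul_left h c, fun _ _ h c => mul_le_mul_right h c⟩
  have : Archimedean (Additive α) := ⟨fun x _ hy => arch x _ hy⟩
  obtain ⟨f, hf⟩ := Archimedean.exists_orderAddMonoidHom_real_injective (Additive α)
  exact ⟨AddMonoidHom.toMultiplicativeRight f, hf⟩

end ArchimedeanGroup

theorem exists_le_iterate_of_forall_lt_apply {f : ℝ → ℝ} (hf : Continuous f)
    (hlt : ∀ x, x < f x) (x b : ℝ) : ∃ n : ℕ, b ≤ f^[n] x := by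
  by_contra! hb
  have hmono : Monotone fun n => f^[n] x :=
    monotone_nat_of_le_succ fun n => by rw [iterate_succ_apply']; exact (hlt _).le
  have hbdd : BddAbove (range fun n => f^[n] x) := ⟨b, by rintro _ ⟨n, rfl⟩; exact (hb n).le⟩
  have hfix := isFixedPt_of_tendsto_iterate (tendsto_atTop_ciSup hmono hbdd) hf.continuousAt
  exact (hlt _).ne' hfix

section PermSubgroup

variable {G : Subgroup (Equiv.Perm ℝ)}

theorem eq_of_apply_eq_of_free (hfree : ∀ g ∈ G, g ≠ 1 → ∀ x : ℝ, g x ≠ x) {g h : G} {x : ℝ}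
    (hx : (g : Equiv.Perm ℝ) x = (h : Equiv.Perm ℝ) x) : g = h := by
  by_contra hne
  refine hfree (g⁻¹ * h : G) (g⁻¹ * h).2 ?_ x ?_
  · rwa [Ne, OneMemClass.coe_eq_one, inv_mul_eq_one]
  · rw [Subgroup.coe_mul, Subgroup.coe_inv, Equiv.Perm.mul_apply, ← hx, Equiv.Perm.inv_def,
      Equiv.symm_apply_apply]

theorem apply_le_apply_of_apply_le_of_free (hcont : ∀ g ∈ G, Continuous ⇑g)
    (hfree : ∀ g ∈ G, g ≠ 1 → ∀ x : ℝ, g x ≠ x) {g h : G} {y : ℝ}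
    (hy : (g : Equiv.Perm ℝ) y ≤ (h : Equiv.Perm ℝ) y) (x : ℝ) :
    (g : Equiv.Perm ℝ) x ≤ (h : Equiv.Perm ℝ) x := by
  by_contra! hx
  have hdiff : ContinuousOn (fun t => (h : Equiv.Perm ℝ) t - (g : Equiv.Perm ℝ) t) (uIcc x y) :=
    ((hcont h h.2).sub (hcont g g.2)).continuousOn
  obtain ⟨c, -, hc⟩ := intermediate_value_uIcc hdiff
    (mem_uIcc.2 (Or.inl ⟨by linarith, by linarith⟩) : (0 : ℝ) ∈ uIcc _ _)
  obtain rfl := eq_of_apply_eq_of_free hfree (g := g) (h := h) (x := c) (by linarith)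
  exact hx.false

end PermSubgroup

/-- A group of orientation-preserving homeomorphisms of `ℝ`
acting without fixed points is isomorphic to a subgroup of the additive group `(ℝ, +)`:
there is an injective group homomorphism `G →* Multiplicative ℝ`. -/
theorem fixed_point_free_group_embeds_in_real
    (G : Subgroup (Equiv.Perm ℝ))
    (hmono : ∀ g ∈ G, StrictMono ⇑g) (hcont : ∀ g ∈ G, Continuous ⇑g)
    (hfree : ∀ g ∈ G, g ≠ 1 → ∀ x : ℝ, g x ≠ x) :
    ∃ φ : G →* Multiplicative ℝ, Function.Injective φ := by
  let : LinearOrder G :=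
    LinearOrder.lift' (fun g : G => (g : Equiv.Perm ℝ) 0) fun _ _ => eq_of_apply_eq_of_free hfree
  have : MulLeftMono G := ⟨fun f _ _ h => (hmono f f.2).monotone h⟩
  have : MulRightMono G := ⟨fun _ _ _ h => apply_le_apply_of_apply_le_of_free hcont hfree h _⟩
  refine exists_injective_monoidHom_real_of_archimedean fun g h hh => ?_
  have hlt x : x < (h : Equiv.Perm ℝ) x := by
    refine (apply_le_apply_of_apply_le_of_free hcont hfree hh.le x).lt_of_ne' ?_
    exact hfree h h.2 (by exact_mod_cast hh.ne') x
  obtain ⟨n, hn⟩ := exists_le_iterate_of_forall_lt_apply (hcont h h.2) hlt 0 ((g : Equiv.Perm ℝ) 0)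
  refine ⟨n, ?_⟩
  change (g : Equiv.Perm ℝ) 0 ≤ ((h ^ n : G) : Equiv.Perm ℝ) 0
  rwa [Subgroup.coe_pow, Equiv.Perm.coe_pow]
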